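/- Let (V, r, par) be a rooted tree, D a finite nonempty type, and for each non-root vertex v let h_v : D × D → ℝ be a cost function between v and its parent. Suppose m : V → D → ℝ satisfies, for every vertex v and every d ∈ D, m v d = Σ_{c ∈ C(v)} min_{d' ∈ D} (h_c(d', d) + m c d'). Then the minimum over all assignments σ : V → D of Σ_{v ≠ r} h_v(σ v, σ (par v)) equals min_{d ∈ D} m r d. (Correctness of the bottom-up utility-propagation/DPOP recursion on a tree, the backbone of the completeness of AsymDPOP's utility and value propagation phases.) -/

import Mathlib

/-- `anc par u v` : `u` is an ancestor of `v` in the rooted tree with parent map `par`. -/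
def anc {V : Type*} (par : V → Option V) (u v : V) : Prop :=
  Relation.TransGen (fun p c => par c = some p) u v

/-!
The edges strictly below a vertex `v` split into the blocks `{c} ∪ desc par c`, one per child `c`,
and the cost of the block of `c` depends on `σ` only through `σ v` and the values of `σ` on the
block. So once `σ v = d` is fixed, the minimum over `σ` splits into independent minima, one per
child, and fixing `σ c = d'` inside each of them gives, by induction down the tree,
`m v d = min_σ subtreeCost par r h v (σ[v ↦ d])`. At the root the subtree cost is the whole
objective, and the remaining minimum over `σ r` is `min_d m r d`.
-/

namespace Finset

variable {ι α β : Type*} [Fintype ι] [DecidableEq ι] [Fintype α] [Nonempty α]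

theorem inf'_univ_eq_inf'_inf'_update [SemilatticeInf β] (i : ι) (G : (ι → α) → β) :
    univ.inf' univ_nonempty G =
      univ.inf' univ_nonempty fun a =>
        univ.inf' univ_nonempty fun σ => G (Function.update σ i a) := by
  refine le_antisymm (le_inf' _ _ fun a _ => le_inf' _ _ fun σ _ => inf'_le _ (mem_univ _)) ?_
  refine le_inf' _ _ fun σ _ => inf'_le_of_le _ (mem_univ (σ i)) ?_
  exact inf'_le_of_le _ (mem_univ σ) (by rw [Function.update_eq_self])

theorem inf'_univ_sum_eq_sum_inf' {κ : Type*} [AddCommMonoid β] [LinearOrder β]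
    [IsOrderedAddMonoid β] (s : Finset κ) (t : κ → Finset ι) (ht : (s : Set κ).PairwiseDisjoint t)
    (f : κ → (ι → α) → β) (hf : ∀ k ∈ s, ∀ σ τ : ι → α, (∀ i ∈ t k, σ i = τ i) → f k σ = f k τ) :
    univ.inf' univ_nonempty (fun σ => ∑ k ∈ s, f k σ) =
      ∑ k ∈ s, univ.inf' univ_nonempty (f k) := by
  classical
  refine le_antisymm ?_ (le_inf' _ _ fun σ _ => sum_le_sum fun k _ => inf'_le _ (mem_univ σ))
  choose g _ hg using fun k => exists_mem_eq_inf' univ_nonempty (f k)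
  let glued : ι → α := fun i =>
    if hi : ∃ k ∈ s, i ∈ t k then g hi.choose i else Classical.arbitrary α
  have hglued : ∀ k ∈ s, f k glued = f k (g k) := by
    refine fun k hk => hf k hk _ _ fun i hi => ?_
    have hex : ∃ k ∈ s, i ∈ t k := ⟨k, hk, hi⟩
    obtain ⟨hk', hik'⟩ := hex.choose_spec
    have hchoose : hex.choose = k := by
      by_contra hne
      exact disjoint_left.1 (ht hk' hk hne) hik' hi
    simp only [glued, dif_pos hex, hchoose]
  calc univ.inf' univ_nonempty (fun σ => ∑ k ∈ s, f k σ)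
      ≤ ∑ k ∈ s, f k glued := inf'_le _ (mem_univ _)
    _ = ∑ k ∈ s, univ.inf' univ_nonempty (f k) :=
      sum_congr rfl fun k hk => by rw [hglued k hk, hg]

end Finset

section Ancestors

variable {V : Type*} {par : V → Option V}

theorem exists_par_eq_of_anc {u v : V} (huv : anc par u v) :
    ∃ p, par v = some p ∧ (p = u ∨ anc par u p) := by
  obtain ⟨p, hup, hpv⟩ := Relation.TransGen.tail'_iff.1 huv
  exact ⟨p, hpv, Relation.reflTransGen_iff_eq_or_transGen.1 hup⟩

theorem not_anc_of_par_eq_none {u v : V} (hv : par v = none) : ¬ anc par u v := fun huv => by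
  obtain ⟨p, hp, -⟩ := exists_par_eq_of_anc huv
  simp [hv] at hp

theorem not_anc_self_of_par_eq {c p : V} (hc : par c = some p) (hp : ¬ anc par p p) :
    ¬ anc par c c := by
  intro hcc
  obtain ⟨q, hq, hqc | hcq⟩ := exists_par_eq_of_anc hcc
  · obtain rfl : p = c := (Option.some.inj (hc.symm.trans hq)).trans hqc
    exact hp hcc
  · obtain rfl : q = p := Option.some.inj (hq.symm.trans hc)
    exact hp (hcq.head hc)

theorem not_anc_self {r : V} (hroot : par r = none) (hconn : ∀ v : V, v ≠ r → anc par r v)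
    (v : V) : ¬ anc par v v := by
  have hr : ¬ anc par r r := not_anc_of_par_eq_none hroot
  by_cases hv : v = r
  · exact hv ▸ hr
  have hrv := hconn v hv
  clear hv
  induction hrv with
  | single hc => exact not_anc_self_of_par_eq hc hr
  | tail _ hc ih => exact not_anc_self_of_par_eq hc ih

theorem reflTransGen_par_total {a b u : V}
    (ha : Relation.ReflTransGen (fun p c => par c = some p) a u)
    (hb : Relation.ReflTransGen (fun p c => par c = some p) b u) :
    Relation.ReflTransGen (fun p c => par c = some p) a b ∨
      Relation.ReflTransGen (fun p c => par c = some p) b a := by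
  induction ha with
  | refl => exact Or.inr hb
  | tail hax hxu ih =>
    rcases (Relation.ReflTransGen.cases_tail_iff _ _ _).1 hb with rfl | ⟨y, hby, hyu⟩
    · exact Or.inl (hax.tail hxu)
    · obtain rfl : y = _ := Option.some.inj (hyu.symm.trans hxu)
      exact ih hby

theorem eq_of_par_eq_of_reflTransGen (hacyc : ∀ v : V, ¬ anc par v v) {c c' v : V}
    (hc : par c = some v) (hc' : par c' = some v)
    (hcc' : Relation.ReflTransGen (fun p c => par c = some p) c c') : c = c' := by
  rcases Relation.reflTransGen_iff_eq_or_transGen.1 hcc' with h | h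
  · exact h.symm
  obtain ⟨p, hp, hcp⟩ := exists_par_eq_of_anc h
  obtain rfl : p = v := Option.some.inj (hp.symm.trans hc')
  exfalso
  rcases hcp with rfl | hcp
  · exact hacyc _ (.single hc)
  · exact hacyc _ (hcp.tail hc)

theorem wellFounded_anc [Finite V] (hacyc : ∀ v : V, ¬ anc par v v) :
    WellFounded fun c v => anc par v c := by
  have : IsTrans V fun c v => anc par v c := ⟨fun _ _ _ h₁ h₂ => h₂.trans h₁⟩
  have : Std.Irrefl fun c v => anc par v c := ⟨hacyc⟩
  exact Finite.wellFounded_of_trans_of_irrefl _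

end Ancestors

section Subtrees

variable {V : Type*} [Fintype V] {par : V → Option V}

open scoped Classical in
noncomputable def desc (par : V → Option V) (v : V) : Finset V :=
  Finset.univ.filter (anc par v)

theorem mem_desc {u v : V} : u ∈ desc par v ↔ anc par v u := by
  simp [desc]

variable [DecidableEq V]

theorem mem_insert_desc {u v : V} :
    u ∈ insert v (desc par v) ↔ Relation.ReflTransGen (fun p c => par c = some p) v u := by
  rw [Finset.mem_insert, mem_desc, Relation.reflTransGen_iff_eq_or_transGen]
  rfl

def children (par : V → Option V) (v : V) : Finset V :=
  Finset.univ.filter fun c => par c = some v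

theorem desc_eq_biUnion_children (v : V) :
    desc par v = (children par v).biUnion fun c => insert c (desc par c) := by
  ext u
  simp only [Finset.mem_biUnion, children, Finset.mem_filter, Finset.mem_univ, true_and,
    mem_insert_desc, mem_desc]
  exact Relation.TransGen.head'_iff

theorem pairwiseDisjoint_children (hacyc : ∀ v : V, ¬ anc par v v) (v : V) :
    (children par v : Set V).PairwiseDisjoint fun c => insert c (desc par c) := by
  intro c hc c' hc' hne
  simp only [children, Finset.coe_filter, Finset.mem_univ, true_and, Set.mem_ofPred_eq] at hc hc'
  refine Finset.disjoint_left.2 fun u hu hu' => hne ?_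
  rw [mem_insert_desc] at hu hu'
  rcases reflTransGen_par_total hu hu' with h | h
  · exact eq_of_par_eq_of_reflTransGen hacyc hc hc' h
  · exact (eq_of_par_eq_of_reflTransGen hacyc hc' hc h).symm

theorem desc_root {r : V} (hroot : par r = none) (hconn : ∀ v : V, v ≠ r → anc par r v) :
    desc par r = Finset.univ.filter fun v => v ≠ r := by
  ext u
  simp only [mem_desc, Finset.mem_filter, Finset.mem_univ, true_and]
  exact ⟨fun hu hur => not_anc_of_par_eq_none hroot (hur ▸ hu), hconn u⟩

variable {D : Type*}

noncomputable def subtreeCost (par : V → Option V) (r : V) (h : V → D → D → ℝ) (v : V)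
    (σ : V → D) : ℝ :=
  ∑ u ∈ desc par v, h u (σ u) (σ ((par u).getD r))

variable {r : V} {h : V → D → D → ℝ}

theorem subtreeCost_congr {v : V} {σ τ : V → D}
    (hστ : ∀ u ∈ insert v (desc par v), σ u = τ u) :
    subtreeCost par r h v σ = subtreeCost par r h v τ := by
  refine Finset.sum_congr rfl fun u hu => ?_
  obtain ⟨p, hp, hvp⟩ := exists_par_eq_of_anc (mem_desc.1 hu)
  rw [hp, Option.getD_some, hστ u (Finset.mem_insert_of_mem hu),
    hστ p (Finset.mem_insert.2 (hvp.imp_right mem_desc.2))]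

theorem subtreeCost_eq_sum_children (hacyc : ∀ v : V, ¬ anc par v v) (v : V) (σ : V → D) :
    subtreeCost par r h v σ =
      ∑ c ∈ children par v, (h c (σ c) (σ v) + subtreeCost par r h c σ) := by
  rw [subtreeCost, desc_eq_biUnion_children,
    Finset.sum_biUnion (pairwiseDisjoint_children hacyc v)]
  refine Finset.sum_congr rfl fun c hc => ?_
  have hcv : par c = some v := (Finset.mem_filter.1 hc).2
  rw [Finset.sum_insert fun hcc => hacyc c (mem_desc.1 hcc), hcv, Option.getD_some, subtreeCost]

theorem notMem_insert_desc_of_mem_children (hacyc : ∀ v : V, ¬ anc par v v) {c v : V}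
    (hc : c ∈ children par v) : v ∉ insert c (desc par c) := fun hv =>
  hacyc c (Relation.TransGen.tail' (mem_insert_desc.1 hv) (Finset.mem_filter.1 hc).2)

variable [Fintype D] [Nonempty D]

theorem eq_inf'_subtreeCost (hacyc : ∀ v : V, ¬ anc par v v) {m : V → D → ℝ}
    (hm : ∀ (v : V) (d : D), m v d = ∑ c ∈ children par v,
      Finset.univ.inf' Finset.univ_nonempty fun d' : D => h c d' d + m c d')
    (v : V) (d : D) :
    m v d = Finset.univ.inf' Finset.univ_nonempty fun σ : V → D =>
      subtreeCost par r h v (Function.update σ v d) := by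
  induction v using (wellFounded_anc hacyc).induction generalizing d with
  | _ v ih => ?_
  have hmin_child : ∀ c ∈ children par v,
      (Finset.univ.inf' Finset.univ_nonempty fun d' : D => h c d' d + m c d') =
        Finset.univ.inf' Finset.univ_nonempty fun σ : V → D =>
          h c (σ c) d + subtreeCost par r h c σ := by
    intro c hc
    have hvc : anc par v c := .single (Finset.mem_filter.1 hc).2
    rw [Finset.inf'_univ_eq_inf'_inf'_update c]
    refine Finset.inf'_congr _ rfl fun d' _ => ?_
    simp only [Function.update_self]
    rw [ih c hvc d']
    exact Finset.apply_inf'_eq_inf'_comp _ (h c d' d + ·) (add_min _)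
  rw [hm, Finset.sum_congr rfl hmin_child, ← Finset.inf'_univ_sum_eq_sum_inf' _ _
    (pairwiseDisjoint_children hacyc v) _ fun c _ σ τ hστ => by
      rw [hστ c (Finset.mem_insert_self _ _), subtreeCost_congr hστ]]
  refine Finset.inf'_congr _ rfl fun σ _ => ?_
  rw [subtreeCost_eq_sum_children hacyc, Function.update_self]
  refine Finset.sum_congr rfl fun c hc => ?_
  have hvc := notMem_insert_desc_of_mem_children hacyc hc
  rw [Function.update_of_ne (ne_of_mem_of_not_mem (Finset.mem_insert_self _ _) hvc),
    subtreeCost_congr fun u hu => Function.update_of_ne (ne_of_mem_of_not_mem hu hvc) _ _]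

end Subtrees

theorem dpop_tree_recursion_correct_general {V : Type*} [Fintype V] [DecidableEq V]
    (r : V) (par : V → Option V)
    (hroot : par r = none)
    (hconn : ∀ v : V, v ≠ r → anc par r v)
    {D : Type*} [Fintype D] [Nonempty D]
    (h : V → D → D → ℝ) (m : V → D → ℝ)
    (hm : ∀ (v : V) (d : D),
      m v d = ∑ c ∈ Finset.univ.filter (fun c : V => par c = some v),
        Finset.univ.inf' Finset.univ_nonempty fun d' : D => h c d' d + m c d') :
    (Finset.univ.inf' Finset.univ_nonempty fun σ : V → D =>
      ∑ v ∈ Finset.univ.filter (fun v : V => v ≠ r), h v (σ v) (σ ((par v).getD r))) =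
      Finset.univ.inf' Finset.univ_nonempty fun d : D => m r d := by
  calc _ = Finset.univ.inf' Finset.univ_nonempty fun σ : V → D => subtreeCost par r h r σ := by
        simp only [subtreeCost, desc_root hroot hconn]
    _ = Finset.univ.inf' Finset.univ_nonempty fun d : D =>
          Finset.univ.inf' Finset.univ_nonempty fun σ : V → D =>
            subtreeCost par r h r (Function.update σ r d) :=
        Finset.inf'_univ_eq_inf'_inf'_update r _
    _ = _ := Finset.inf'_congr _ rfl fun d _ =>
        (eq_inf'_subtreeCost (not_anc_self hroot hconn) hm r d).symm

/-- Correctness of the bottom-up DPOP recursion on a rooted tree: if the messages `m`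
satisfy `m v d = Σ_{c ∈ C(v)} min_{d'} (h c d' d + m c d')`, then the minimum over all
assignments `σ : V → D` of `Σ_{v ≠ r} h v (σ v) (σ (par v))` equals `min_d (m r d)`. -/
theorem dpop_tree_recursion_correct {V : Type*} [Fintype V] [DecidableEq V]
    (r : V) (par : V → Option V)
    (hroot : par r = none) (hne : ∀ v : V, v ≠ r → par v ≠ none)
    (hconn : ∀ v : V, v ≠ r → anc par r v)
    {D : Type*} [Fintype D] [Nonempty D]
    (h : V → D → D → ℝ) (m : V → D → ℝ)
    (hm : ∀ (v : V) (d : D),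
      m v d = ∑ c ∈ Finset.univ.filter (fun c : V => par c = some v),
        Finset.univ.inf' Finset.univ_nonempty fun d' : D => h c d' d + m c d') :
    (Finset.univ.inf' Finset.univ_nonempty fun σ : V → D =>
      ∑ v ∈ Finset.univ.filter (fun v : V => v ≠ r), h v (σ v) (σ ((par v).getD r))) =
      Finset.univ.inf' Finset.univ_nonempty fun d : D => m r d :=
  dpop_tree_recursion_correct_general r par hroot hconn h m hm
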